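/- arXiv:1101.3489 — 2 statements merged into one kernel-verified Lean document; each statement's English description precedes it below -/
import Mathlib

section
/- For any positive integer n and any integer k ≥ 2, the singular series ∑_{q=1}^∞ (μ(q)^k / φ(q)^k) c_q(-n) converges absolutely and equals the Euler product ∏_{p | n} (1 - (-1/(p-1))^{k-1}) · ∏_{p ∤ n} (1 - (-1/(p-1))^k). -/
open Real Complex ArithmeticFunction
open scoped ArithmeticFunction.Moebius

/-- `e(x) = exp(2πix)` -/
noncomputable def e (x : ℝ) : ℂ := Complex.exp (2 * Real.pi * Complex.I * x)

/-- The Ramanujan sum `c_q(m) = ∑_{a ≤ q, (a,q)=1} e(ma/q)`. -/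
noncomputable def ramanujanSum (q : ℕ) (m : ℤ) : ℂ :=
  ∑ a ∈ (Finset.Icc 1 q).filter (fun a => Nat.Coprime a q),
    e ((m : ℝ) * (a : ℝ) / (q : ℝ))

/-! The summand `f q = μ(q)^k c_q(-n) / φ(q)^k` is multiplicative in `q`, since
`c_q(m) = ∑_{d ∣ q} μ(d) (q/d) [q/d ∣ m]` is a Dirichlet convolution of multiplicative
functions. It vanishes off the squarefree numbers, and `|f p| ≤ n / (p-1)^2` at primes because
`k ≥ 2`. The partial sums of `|f|` are then bounded by
`∏_{p<N} (1 + |f p|) ≤ exp (∑_p |f p|)`, which gives absolute convergence, and the Euler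
product `∏_p (1 + f p)` evaluates the series, using `c_p(-n) = p [p ∣ n] - 1`. -/

open Finset

lemma e_intCast_div_natCast (m : ℤ) (r : ℕ) : e (m / r) = Complex.exp (2 * π * I / r) ^ m := by
  rw [e, ← Complex.exp_int_mul]
  congr 1
  push_cast
  ring

lemma sum_Icc_pow_eq_zero {K : Type*} [Field K] {z : K} {r : ℕ} (hz : z ^ r = 1) (hz1 : z ≠ 1) :
    ∑ b ∈ Icc 1 r, z ^ b = 0 := by
  have hshift : ∑ b ∈ Icc 1 r, z ^ b = z * ∑ b ∈ range r, z ^ b := by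
    rw [← Ico_add_one_right_eq_Icc, sum_Ico_eq_sum_range, mul_sum]
    simp [pow_succ', add_comm]
  rw [hshift, geom_sum_eq hz1, hz, sub_self, zero_div, mul_zero]

lemma sum_Icc_e_mul_div (m : ℤ) {r : ℕ} (hr : r ≠ 0) :
    ∑ b ∈ Icc 1 r, e (m * b / r) = if (r : ℤ) ∣ m then (r : ℂ) else 0 := by
  set ζ := Complex.exp (2 * π * I / r)
  have hζ : IsPrimitiveRoot ζ r := Complex.isPrimitiveRoot_exp r hr
  have hterm : ∀ b : ℕ, e (m * b / r) = (ζ ^ m) ^ b := by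
    intro b
    rw [← zpow_natCast, ← zpow_mul, ← Int.cast_natCast b, ← e_intCast_div_natCast]
    push_cast
    ring_nf
  simp_rw [hterm]
  split_ifs with hdvd
  · simp [(hζ.zpow_eq_one_iff_dvd m).2 hdvd]
  · refine sum_Icc_pow_eq_zero ?_ (mt (hζ.zpow_eq_one_iff_dvd m).1 hdvd)
    rw [← zpow_natCast, ← zpow_mul, mul_comm, zpow_mul, zpow_natCast, hζ.pow_eq_one, one_zpow]

lemma sum_Icc_filter_dvd {M : Type*} [AddCommMonoid M] (f : ℕ → M) {d : ℕ} (hd : 0 < d)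
    (q : ℕ) :
    ∑ a ∈ Icc 1 q with d ∣ a, f a = ∑ b ∈ Icc 1 (q / d), f (d * b) := by
  symm
  refine sum_nbij' (d * ·) (· / d) ?_ ?_ ?_ ?_ ?_
  · intro b hb
    simp only [mem_Icc, mem_filter] at hb ⊢
    rw [Nat.le_div_iff_mul_le hd, mul_comm] at hb
    exact ⟨⟨Nat.one_le_iff_ne_zero.2 (mul_ne_zero hd.ne' (by omega)), hb.2⟩,
      dvd_mul_right d b⟩
  · intro a ha
    obtain ⟨⟨ha1, haq⟩, hda⟩ : (1 ≤ a ∧ a ≤ q) ∧ d ∣ a := by simpa using ha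
    simp only [mem_Icc]
    exact ⟨(Nat.one_le_div_iff hd).2 (Nat.le_of_dvd ha1 hda), Nat.div_le_div_right haq⟩
  · intro b _
    exact Nat.mul_div_cancel_left b hd
  · intro a ha
    exact Nat.mul_div_cancel' (mem_filter.1 ha).2
  · intro b _
    rfl

lemma sum_moebius_divisors {R : Type*} [Ring R] (n : ℕ) :
    ∑ d ∈ n.divisors, (μ d : R) = if n = 1 then 1 else 0 := by
  have h := congr($(coe_moebius_mul_coe_zeta (R := R)) n)
  rwa [coe_mul_zeta_apply, one_apply] at h

lemma sum_Icc_filter_coprime {R : Type*} [Ring R] (f : ℕ → R) (q : ℕ) :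
    ∑ a ∈ Icc 1 q with a.Coprime q, f a =
      ∑ d ∈ q.divisors, (μ d : R) * ∑ b ∈ Icc 1 (q / d), f (d * b) := by
  have hcoprime : ∀ a ∈ Icc 1 q,
      (if a.Coprime q then f a else 0) = ∑ d ∈ q.divisors with d ∣ a, (μ d : R) * f a := by
    intro a ha
    have hq : q ≠ 0 := by simp only [mem_Icc] at ha; omega
    rw [← sum_mul, filter_congr (q := (· ∣ a.gcd q)) fun d hd ↦ by
      simp [Nat.dvd_gcd_iff, Nat.dvd_of_mem_divisors hd],
      Nat.divisors_filter_dvd_of_dvd hq (Nat.gcd_dvd_right a q), sum_moebius_divisors]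
    split_ifs <;> simp_all [Nat.Coprime]
  rw [sum_filter, sum_congr rfl hcoprime]
  simp_rw [sum_filter]
  rw [sum_comm]
  refine sum_congr rfl fun d hd ↦ ?_
  rw [← sum_filter, ← mul_sum, sum_Icc_filter_dvd f (Nat.pos_of_mem_divisors hd)]

noncomputable def dvdWeight (m : ℤ) : ArithmeticFunction ℂ :=
  ⟨fun r ↦ if (r : ℤ) ∣ m then (r : ℂ) else 0, by simp⟩

lemma dvdWeight_apply (m : ℤ) (r : ℕ) :
    dvdWeight m r = if (r : ℤ) ∣ m then (r : ℂ) else 0 := rfl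

lemma isMultiplicative_dvdWeight (m : ℤ) : (dvdWeight m).IsMultiplicative := by
  refine ⟨by simp [dvdWeight_apply], fun {x y} hxy ↦ ?_⟩
  have hdvd : ((x * y : ℕ) : ℤ) ∣ m ↔ (x : ℤ) ∣ m ∧ (y : ℤ) ∣ m := by
    push_cast
    exact ⟨fun h ↦ ⟨(dvd_mul_right _ _).trans h, (dvd_mul_left _ _).trans h⟩,
      fun h ↦ (Nat.isCoprime_iff_coprime.2 hxy).mul_dvd h.1 h.2⟩
  simp only [dvdWeight_apply, hdvd]
  split_ifs <;> simp_all

theorem ramanujanSum_eq_moebius_mul (q : ℕ) (m : ℤ) :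
    ramanujanSum q m = ((μ : ArithmeticFunction ℂ) * dvdWeight m) q := by
  rw [ramanujanSum, sum_Icc_filter_coprime, mul_apply,
    Nat.sum_divisorsAntidiagonal fun a b ↦ (μ : ArithmeticFunction ℂ) a * dvdWeight m b]
  refine sum_congr rfl fun d hd ↦ ?_
  have hd0 : (d : ℝ) ≠ 0 := by exact_mod_cast (Nat.pos_of_mem_divisors hd).ne'
  have hq : (q : ℝ) = d * (q / d : ℕ) := by
    exact_mod_cast (Nat.mul_div_cancel' (Nat.dvd_of_mem_divisors hd)).symm
  have hqd : q / d ≠ 0 := (Nat.div_pos (Nat.divisor_le hd) (Nat.pos_of_mem_divisors hd)).ne'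
  rw [intCoe_apply, dvdWeight_apply, ← sum_Icc_e_mul_div m hqd]
  congr 1
  refine sum_congr rfl fun b _ ↦ congrArg e ?_
  rw [hq]
  push_cast
  field_simp

lemma isMultiplicative_moebius_mul_dvdWeight (m : ℤ) :
    ((μ : ArithmeticFunction ℂ) * dvdWeight m).IsMultiplicative :=
  isMultiplicative_moebius.intCast.mul (isMultiplicative_dvdWeight m)

lemma ramanujanSum_one (m : ℤ) : ramanujanSum 1 m = 1 := by
  rw [ramanujanSum_eq_moebius_mul, (isMultiplicative_moebius_mul_dvdWeight m).map_one]

lemma ramanujanSum_mul {q r : ℕ} (hqr : q.Coprime r) (m : ℤ) :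
    ramanujanSum (q * r) m = ramanujanSum q m * ramanujanSum r m := by
  simp only [ramanujanSum_eq_moebius_mul]
  exact (isMultiplicative_moebius_mul_dvdWeight m).map_mul_of_coprime hqr

lemma ramanujanSum_prime {p : ℕ} (hp : p.Prime) (m : ℤ) :
    ramanujanSum p m = (if (p : ℤ) ∣ m then (p : ℂ) else 0) - 1 := by
  rw [ramanujanSum_eq_moebius_mul, mul_apply,
    Nat.sum_divisorsAntidiagonal fun a b ↦ (μ : ArithmeticFunction ℂ) a * dvdWeight m b,
    hp.divisors, sum_pair hp.one_lt.ne]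
  simp [dvdWeight_apply, moebius_apply_prime hp, Nat.div_self hp.pos]
  ring

lemma norm_ramanujanSum_prime_le {p : ℕ} (hp : p.Prime) {m : ℤ} (hm : m ≠ 0) :
    ‖ramanujanSum p m‖ ≤ |(m : ℝ)| := by
  rw [ramanujanSum_prime hp]
  split_ifs with hdvd
  · have hpm : p ≤ m.natAbs := Nat.le_of_dvd (Int.natAbs_pos.2 hm) (Int.natCast_dvd.1 hdvd)
    rw [← Nat.cast_pred hp.pos, Complex.norm_natCast, ← Int.cast_abs, ← Int.natCast_natAbs]
    exact_mod_cast (Nat.pred_le p).trans hpm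
  · rw [zero_sub, norm_neg, norm_one, ← Int.cast_abs]
    exact_mod_cast Int.one_le_abs hm

lemma hasSum_prime_pow_of_squarefree_support {M : Type*} [AddCommMonoid M] [TopologicalSpace M]
    {f : ℕ → M} (hf : ∀ q, ¬Squarefree q → f q = 0) {p : ℕ} (hp : p.Prime) :
    HasSum (fun b ↦ f (p ^ b)) (f 1 + f p) := by
  rw [show f 1 + f p = ∑ b ∈ {0, 1}, f (p ^ b) by simp]
  refine hasSum_sum_of_ne_finset_zero fun b hb ↦ hf _ ?_
  simp only [mem_insert, mem_singleton, not_or] at hb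
  rw [Nat.squarefree_pow_iff hp.ne_one hb.1]
  exact fun h ↦ hb.2 h.2

lemma sum_primesBelow_le_tsum {F : ℕ → ℝ} (hF : ∀ q, 0 ≤ F q)
    (hprimes : Summable fun p : Nat.Primes ↦ F p) (N : ℕ) :
    ∑ p ∈ N.primesBelow, F p ≤ ∑' p : Nat.Primes, F p := by
  have hsubtype :
      ∑ p ∈ N.primesBelow, F p = ∑ p ∈ N.primesBelow.subtype Nat.Prime, F p := by
    rw [sum_subtype_eq_sum_filter, filter_true_of_mem fun p ↦ Nat.prime_of_mem_primesBelow]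
  exact hsubtype.trans_le (hprimes.sum_le_tsum (ι := Nat.Primes) _ fun p _ ↦ hF p)

lemma summable_of_multiplicative_of_summable_primes {F : ℕ → ℝ} (hF : ∀ q, 0 ≤ F q)
    (h0 : F 0 = 0) (h1 : F 1 = 1) (hmul : ∀ {x y : ℕ}, x.Coprime y → F (x * y) = F x * F y)
    (hsq : ∀ q, ¬Squarefree q → F q = 0) (hprimes : Summable fun p : Nat.Primes ↦ F p) :
    Summable F := by
  have hpow {p : ℕ} (hp : p.Prime) : HasSum (fun b ↦ F (p ^ b)) (1 + F p) :=
    h1 ▸ hasSum_prime_pow_of_squarefree_support hsq hp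
  refine summable_of_sum_range_le hF (c := Real.exp (∑' p : Nat.Primes, F p)) fun N ↦ ?_
  obtain ⟨hsmooth, hprod⟩ :=
    EulerProduct.summable_and_hasSum_smoothNumbers_prod_primesBelow_tsum
      h1 hmul (fun hp ↦ (hpow hp).summable.norm) N
  have hindicator : ∀ q ∈ range N, F q = N.smoothNumbers.indicator F q := by
    intro q hq
    rcases q.eq_zero_or_pos with rfl | hq0
    · simp [Set.indicator_apply, h0]
    · rw [Set.indicator_of_mem (Nat.mem_smoothNumbers_of_lt hq0 (mem_range.1 hq))]
  calc ∑ q ∈ range N, F q = ∑ q ∈ range N, N.smoothNumbers.indicator F q :=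
        sum_congr rfl hindicator
    _ ≤ ∑' q, N.smoothNumbers.indicator F q :=
      Summable.sum_le_tsum _ (fun q _ ↦ Set.indicator_nonneg (fun q _ ↦ hF q) q)
        (summable_subtype_iff_indicator.1 (hsmooth.congr fun q ↦ norm_of_nonneg (hF q)))
    _ = ∏ p ∈ N.primesBelow, ∑' b, F (p ^ b) :=
      (_root_.tsum_subtype _ _).symm.trans hprod.tsum_eq
    _ = ∏ p ∈ N.primesBelow, (1 + F p) :=
      prod_congr rfl fun p hp ↦ (hpow (Nat.prime_of_mem_primesBelow hp)).tsum_eq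
    _ ≤ ∏ p ∈ N.primesBelow, Real.exp (F p) :=
      prod_le_prod (fun p _ ↦ by linarith [hF p]) fun p _ ↦ by
        linarith [Real.add_one_le_exp (F p)]
    _ = Real.exp (∑ p ∈ N.primesBelow, F p) := (Real.exp_sum _ _).symm
    _ ≤ Real.exp (∑' p : Nat.Primes, F p) :=
      Real.exp_le_exp.2 (sum_primesBelow_le_tsum hF hprimes N)

lemma summable_one_div_natCast_sub_one_sq : Summable fun j : ℕ ↦ 1 / ((j : ℝ) - 1) ^ 2 :=
  (summable_nat_add_iff 1).1 <| (Real.summable_one_div_nat_pow.2 one_lt_two).congr fun j ↦ by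
    push_cast
    ring

noncomputable def singularSeriesTerm (k : ℕ) (m : ℤ) (q : ℕ) : ℂ :=
  (μ q : ℂ) ^ k / (Nat.totient q : ℂ) ^ k * ramanujanSum q m

section singularSeriesTerm

variable {k : ℕ} {m : ℤ}

lemma singularSeriesTerm_zero (hk : k ≠ 0) : singularSeriesTerm k m 0 = 0 := by
  simp [singularSeriesTerm, hk]

lemma singularSeriesTerm_one : singularSeriesTerm k m 1 = 1 := by
  simp [singularSeriesTerm, ramanujanSum_one]

lemma singularSeriesTerm_mul {q r : ℕ} (hqr : q.Coprime r) :
    singularSeriesTerm k m (q * r) = singularSeriesTerm k m q * singularSeriesTerm k m r := by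
  simp only [singularSeriesTerm, isMultiplicative_moebius.map_mul_of_coprime hqr,
    Nat.totient_mul hqr, ramanujanSum_mul hqr]
  push_cast
  ring

lemma singularSeriesTerm_of_not_squarefree (hk : k ≠ 0) {q : ℕ} (hq : ¬Squarefree q) :
    singularSeriesTerm k m q = 0 := by
  simp [singularSeriesTerm, moebius_eq_zero_of_not_squarefree hq, hk]

lemma singularSeriesTerm_prime {p : ℕ} (hp : p.Prime) :
    singularSeriesTerm k m p =
      (-1 / ((p : ℂ) - 1)) ^ k * ((if (p : ℤ) ∣ m then (p : ℂ) else 0) - 1) := by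
  rw [singularSeriesTerm, moebius_apply_prime hp, Nat.totient_prime hp, ramanujanSum_prime hp,
    div_pow, Nat.cast_pred hp.pos]
  push_cast
  ring

lemma one_add_singularSeriesTerm_prime (hk : k ≠ 0) {p : ℕ} (hp : p.Prime) :
    1 + singularSeriesTerm k m p =
      if (p : ℤ) ∣ m then 1 - (-1 / ((p : ℂ) - 1)) ^ (k - 1)
      else 1 - (-1 / ((p : ℂ) - 1)) ^ k := by
  obtain ⟨j, rfl⟩ : ∃ j, k = j + 1 := ⟨k - 1, by omega⟩
  have hp1 : (p : ℂ) - 1 ≠ 0 := sub_ne_zero.2 (by exact_mod_cast hp.one_lt.ne')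
  rw [singularSeriesTerm_prime hp, Nat.add_sub_cancel, pow_succ]
  split_ifs
  · field_simp
    ring
  · ring

lemma norm_singularSeriesTerm_prime_le (hk : 2 ≤ k) (hm : m ≠ 0) {p : ℕ} (hp : p.Prime) :
    ‖singularSeriesTerm k m p‖ ≤ |(m : ℝ)| * (1 / ((p : ℝ) - 1) ^ 2) := by
  have hp2 : (2 : ℝ) ≤ p := by exact_mod_cast hp.two_le
  have hp1 : (1 : ℝ) ≤ p - 1 := by linarith
  have hnorm : ‖(p : ℂ) - 1‖ = (p : ℝ) - 1 := by
    rw [← Nat.cast_pred hp.pos, Complex.norm_natCast, Nat.cast_pred hp.pos]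
  rw [singularSeriesTerm_prime hp, ← ramanujanSum_prime hp, norm_mul, norm_pow, norm_div,
    norm_neg, norm_one, hnorm, mul_comm, one_div_pow]
  gcongr
  exact norm_ramanujanSum_prime_le hp hm

lemma summable_norm_singularSeriesTerm (hk : 2 ≤ k) (hm : m ≠ 0) :
    Summable fun q ↦ ‖singularSeriesTerm k m q‖ := by
  have hk0 : k ≠ 0 := by omega
  refine summable_of_multiplicative_of_summable_primes (fun q ↦ norm_nonneg _)
    (by simp [singularSeriesTerm_zero hk0]) (by simp [singularSeriesTerm_one])
    (fun hqr ↦ by simp [singularSeriesTerm_mul hqr])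
    (fun q hq ↦ by simp [singularSeriesTerm_of_not_squarefree hk0 hq]) ?_
  exact .of_nonneg_of_le (fun _ ↦ norm_nonneg _)
    (fun p ↦ norm_singularSeriesTerm_prime_le hk hm p.prop)
    ((summable_one_div_natCast_sub_one_sq.subtype _).mul_left _)

end singularSeriesTerm

/-- for `n ≥ 1` and `k ≥ 2` the singular series
`∑_q μ(q)^k/φ(q)^k · c_q(-n)` converges absolutely and equals the Euler product
`∏_{p | n} (1 - (-1/(p-1))^{k-1}) · ∏_{p ∤ n} (1 - (-1/(p-1))^k)`. -/
theorem sums_of_many_primes_stmt3 (n k : ℕ) (hn : 1 ≤ n) (hk : 2 ≤ k) :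
    Summable (fun q : ℕ =>
      ‖((μ q : ℂ) ^ k / (Nat.totient q : ℂ) ^ k) * ramanujanSum q (-(n : ℤ))‖) ∧
    ∑' q : ℕ, ((μ q : ℂ) ^ k / (Nat.totient q : ℂ) ^ k) * ramanujanSum q (-(n : ℤ))
      = ∏' p : Nat.Primes,
          (if (p : ℕ) ∣ n then 1 - (-1 / ((p : ℕ) - 1 : ℂ)) ^ (k - 1)
           else 1 - (-1 / ((p : ℕ) - 1 : ℂ)) ^ k) := by
  change Summable (fun q ↦ ‖singularSeriesTerm k (-n) q‖) ∧
    ∑' q, singularSeriesTerm k (-n) q = _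
  have hk0 : k ≠ 0 := by omega
  have hsum := summable_norm_singularSeriesTerm hk (by omega : -(n : ℤ) ≠ 0)
  refine ⟨hsum, ?_⟩
  rw [← EulerProduct.eulerProduct_tprod singularSeriesTerm_one
    (fun h ↦ singularSeriesTerm_mul h) hsum (singularSeriesTerm_zero hk0)]
  refine tprod_congr fun p ↦ ?_
  rw [(hasSum_prime_pow_of_squarefree_support (fun _ ↦ singularSeriesTerm_of_not_squarefree hk0)
    p.prop).tsum_eq, singularSeriesTerm_one, one_add_singularSeriesTerm_prime hk0 p.prop]
  simp only [dvd_neg, Int.natCast_dvd_natCast]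
end

section
/- Let k ≥ 2 be an integer, N a large integer, z = 1/N - 2πiη, and suppose the interval ξ contains (-1/(2qQ), 1/(2qQ)) and is contained in (-1/(qQ), 1/(qQ)], where 1 ≤ q ≤ Q ≤ N^{1/2}/2. Then uniformly for 1 ≤ ℓ ≤ N, ∫_ξ e(-ℓη)/z^k dη = e^{-ℓ/N} ℓ^{k-1}/(k-1)! + O((qQ)^{k-1}). -/
/-!
The function `g(t) = t^{k-1} e^{-t/N}` for `t > 0`, `g(t) = 0` for `t ≤ 0`, has inverse Fourier
transform `(k-1)!/z(η)^k` (a Laplace transform at the complex rate `z(η)`, computed by integrating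
by parts), so Fourier inversion at `t = ℓ` evaluates the integral over all of `ℝ` as
`e^{-ℓ/N} ℓ^{k-1}/(k-1)!`, in place of the residue computation. Outside `ξ` we have
`|η| ≥ 1/(2qQ)`, where `|z| ≥ 2π|η|` bounds the integrand by `|η|^{-k}`, so the tail is at most
`2 (2qQ)^{k-1}/(k-1)`.
-/

open Real Complex

open MeasureTheory Set Filter Topology FourierTransform

section Laplace

variable {z : ℂ}

lemma norm_pow_mul_cexp_neg_mul {t : ℝ} (ht : 0 ≤ t) (n : ℕ) :
    ‖(t : ℂ) ^ n * cexp (-z * t)‖ = t ^ (n : ℝ) * Real.exp (-z.re * t) := by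
  rw [norm_mul, norm_pow, Complex.norm_real, Real.norm_of_nonneg ht, Complex.norm_exp,
    Real.rpow_natCast]
  simp

lemma integrableOn_pow_mul_cexp_neg_mul_Ioi (hz : 0 < z.re) (n : ℕ) :
    IntegrableOn (fun t : ℝ => (t : ℂ) ^ n * cexp (-z * t)) (Ioi 0) := by
  have hdom := integrableOn_rpow_mul_exp_neg_mul_rpow (p := 1) (s := n)
    (by linarith [n.cast_nonneg (α := ℝ)]) one_pos hz
  simp only [Real.rpow_one] at hdom
  refine (integrable_norm_iff (by fun_prop)).mp (hdom.congr_fun (fun t ht => ?_) measurableSet_Ioi)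
  rw [norm_pow_mul_cexp_neg_mul (le_of_lt ht)]

lemma tendsto_pow_mul_cexp_neg_mul_atTop (hz : 0 < z.re) (n : ℕ) :
    Tendsto (fun t : ℝ => (t : ℂ) ^ n * cexp (-z * t)) atTop (𝓝 0) := by
  rw [tendsto_zero_iff_norm_tendsto_zero]
  refine (tendsto_rpow_mul_exp_neg_mul_atTop_nhds_zero n z.re hz).congr' ?_
  filter_upwards [eventually_ge_atTop 0] with t ht
  rw [norm_pow_mul_cexp_neg_mul ht]

lemma integral_pow_mul_cexp_neg_mul_Ioi (hz : 0 < z.re) (n : ℕ) :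
    ∫ t in Ioi (0 : ℝ), (t : ℂ) ^ n * cexp (-z * t) = (n.factorial : ℂ) / z ^ (n + 1) := by
  have hz0 : z ≠ 0 := fun h => by simp [h] at hz
  induction n with
  | zero => simpa using integral_exp_mul_complex_Ioi (a := -z) (by simpa) 0
  | succ n ih =>
    have hu : ∀ t ∈ Ioi (0 : ℝ), HasDerivAt (fun t : ℝ => (t : ℂ) ^ (n + 1))
        ((n + 1 : ℂ) * (t : ℂ) ^ n) t := fun t _ => by
      simpa using (hasDerivAt_pow (n + 1) (t : ℂ)).comp_ofReal
    have hv : ∀ t ∈ Ioi (0 : ℝ), HasDerivAt (fun t : ℝ => -cexp (-z * t) / z)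
        (cexp (-z * t)) t := fun t _ => by
      have := ((hasDerivAt_id (t : ℂ)).const_mul (-z)).comp_ofReal.cexp.neg.div_const z
      simp only [id, mul_one, mul_neg, neg_neg, mul_div_cancel_right₀ _ hz0] at this
      exact this
    have hibp := integral_Ioi_mul_deriv_eq_deriv_mul hu hv
      (integrableOn_pow_mul_cexp_neg_mul_Ioi hz (n + 1))
      (IntegrableOn.congr_fun
        ((integrableOn_pow_mul_cexp_neg_mul_Ioi hz n).const_mul (-(n + 1 : ℂ) / z))
        (fun t _ => by simp only [Pi.mul_apply]; ring) measurableSet_Ioi)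
      (a' := 0) (b' := 0) ?_ ?_
    · have hrw : ∀ t : ℝ, (n + 1 : ℂ) * (t : ℂ) ^ n * (-cexp (-z * t) / z)
          = -((n + 1) / z) * ((t : ℂ) ^ n * cexp (-z * t)) := fun t => by ring
      simp_rw [hibp, hrw, integral_const_mul, ih, Nat.factorial_succ]
      push_cast
      field_simp
      ring
    · have hcont : Continuous
          ((fun t : ℝ => (t : ℂ) ^ (n + 1)) * fun t : ℝ => -cexp (-z * t) / z) := by
        fun_prop
      convert hcont.continuousWithinAt.tendsto (x := 0) (s := Ioi 0) using 2
      simp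
    · convert ((tendsto_pow_mul_cexp_neg_mul_atTop hz (n + 1)).div_const z).neg using 1
      · ext t; simp only [Pi.mul_apply]; ring
      · simp

end Laplace

lemma integrable_comp_abs_of_integrableOn_Ioi {E : Type*} [NormedAddCommGroup E] {f : ℝ → E}
    (hf : IntegrableOn f (Ioi 0)) : Integrable fun x => f |x| := by
  have hIoi : IntegrableOn (fun x => f |x|) (Ioi 0) :=
    hf.congr_fun (fun x hx => by rw [abs_of_pos hx]) measurableSet_Ioi
  have hIic : IntegrableOn (fun x => f |x|) (Iic 0) := by
    have hneg : MeasurableEmbedding fun x : ℝ => -x := (Homeomorph.neg ℝ).measurableEmbedding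
    rw [← Measure.map_neg_eq_self (volume : Measure ℝ), hneg.integrableOn_map_iff]
    simp_rw [Function.comp_def, abs_neg, neg_preimage, neg_Iic, neg_zero]
    exact (integrableOn_Ici_iff_integrableOn_Ioi).mpr hIoi
  rw [← integrableOn_univ, ← Iic_union_Ioi (a := (0 : ℝ))]
  exact hIic.union hIoi

section Tails

variable {r δ : ℝ}

lemma integral_indicator_Ici_rpow_neg_abs (hr : 1 < r) (hδ : 0 < δ) :
    ∫ x, (Ici δ).indicator (fun t => t ^ (-r)) |x| = 2 * (δ ^ (1 - r) / (r - 1)) := by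
  rw [integral_comp_abs, integral_indicator measurableSet_Ici,
    Measure.restrict_restrict measurableSet_Ici, inter_eq_left.mpr (Ici_subset_Ioi.mpr hδ),
    integral_Ici_eq_integral_Ioi, integral_Ioi_rpow_of_lt (by linarith) hδ]
  congr 1
  rw [show -r + 1 = 1 - r by ring, neg_div, ← div_neg, neg_sub]

lemma integrable_indicator_Ici_rpow_neg_abs (hr : 1 < r) (hδ : 0 < δ) :
    Integrable fun x => (Ici δ).indicator (fun t => t ^ (-r)) |x| := by
  refine integrable_comp_abs_of_integrableOn_Ioi (Integrable.integrableOn ?_)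
  exact (integrable_indicator_iff measurableSet_Ici).mpr
    ((integrableOn_Ici_iff_integrableOn_Ioi).mpr (integrableOn_Ioi_rpow_of_lt (by linarith) hδ))

lemma norm_setIntegral_le_of_norm_le_abs_rpow_neg {E : Type*} [NormedAddCommGroup E]
    [NormedSpace ℝ E] {f : ℝ → E} {s : Set ℝ} (hs : MeasurableSet s) (hr : 1 < r) (hδ : 0 < δ)
    (hsδ : ∀ x ∈ s, δ ≤ |x|) (hf : ∀ x ∈ s, ‖f x‖ ≤ |x| ^ (-r)) :
    ‖∫ x in s, f x‖ ≤ 2 * (δ ^ (1 - r) / (r - 1)) := by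
  rw [← integral_indicator hs, ← integral_indicator_Ici_rpow_neg_abs hr hδ]
  refine norm_integral_le_of_norm_le (integrable_indicator_Ici_rpow_neg_abs hr hδ)
    (Eventually.of_forall fun x => ?_)
  by_cases hx : x ∈ s
  · rw [indicator_of_mem hx, indicator_of_mem (mem_Ici.mpr (hsδ x hx))]
    exact hf x hx
  · rw [indicator_of_notMem hx, norm_zero]
    exact indicator_nonneg (fun t ht => Real.rpow_nonneg (hδ.le.trans ht) _) _

end Tails

lemma abs_le_norm_ofReal_sub_two_pi_I_mul (a η : ℝ) : |η| ≤ ‖(a : ℂ) - 2 * π * I * η‖ := by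
  have him : ((a : ℂ) - 2 * π * I * η).im = -(2 * π * η) := by simp
  calc |η| ≤ 2 * π * |η| := le_mul_of_one_le_left (abs_nonneg η) (by linarith [pi_gt_three])
    _ = |((a : ℂ) - 2 * π * I * η).im| := by rw [him, abs_neg, abs_mul, abs_of_pos two_pi_pos]
    _ ≤ _ := abs_im_le_norm _

lemma min_one_mul_one_add_abs_le_norm {a : ℝ} (ha : 0 ≤ a) (η : ℝ) :
    min a 1 * (1 + |η|) / 2 ≤ ‖(a : ℂ) - 2 * π * I * η‖ := by
  have hre : a ≤ ‖(a : ℂ) - 2 * π * I * η‖ := by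
    simpa [abs_of_nonneg ha] using abs_re_le_norm ((a : ℂ) - 2 * π * I * η)
  nlinarith [abs_nonneg η, abs_le_norm_ofReal_sub_two_pi_I_mul a η, min_le_left a 1,
    min_le_right a 1]

lemma integrable_inv_ofReal_sub_two_pi_I_mul_pow {a : ℝ} (ha : 0 < a) {k : ℕ} (hk : 1 < k) :
    Integrable fun η : ℝ => (((a : ℂ) - 2 * π * I * η) ^ k)⁻¹ := by
  set c := min a 1 / 2
  have hc : 0 < c := by positivity
  refine ((integrable_one_add_norm (E := ℝ) (μ := volume) (r := k) (by simpa)).const_mul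
    (c ^ k)⁻¹).mono' (by fun_prop) (Eventually.of_forall fun η => ?_)
  have hlow : c * (1 + |η|) ≤ ‖(a : ℂ) - 2 * π * I * η‖ := by
    simpa [c, mul_div_right_comm] using min_one_mul_one_add_abs_le_norm ha.le η
  rw [norm_inv, norm_pow, Real.norm_eq_abs, Real.rpow_neg (by positivity), Real.rpow_natCast,
    ← mul_inv, ← mul_pow]
  exact inv_anti₀ (by positivity) (pow_le_pow_left₀ (by positivity) hlow k)

lemma norm_e (x : ℝ) : ‖e x‖ = 1 := by
  rw [e, Complex.norm_exp]
  simp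

lemma norm_e_div_ofReal_sub_two_pi_I_mul_pow_le (x a : ℝ) {η : ℝ} (hη : η ≠ 0) (k : ℕ) :
    ‖e x / ((a : ℂ) - 2 * π * I * η) ^ k‖ ≤ |η| ^ (-(k : ℝ)) := by
  rw [norm_div, norm_e, norm_pow, Real.rpow_neg (abs_nonneg η), Real.rpow_natCast, one_div]
  exact inv_anti₀ (by positivity) (pow_le_pow_left₀ (abs_nonneg η)
    (abs_le_norm_ofReal_sub_two_pi_I_mul a η) k)

lemma integrable_e_div_ofReal_sub_two_pi_I_mul_pow {a : ℝ} (ha : 0 < a) {k : ℕ} (hk : 1 < k)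
    (ℓ : ℝ) : Integrable fun η : ℝ => e (ℓ * η) / ((a : ℂ) - 2 * π * I * η) ^ k := by
  refine (integrable_inv_ofReal_sub_two_pi_I_mul_pow ha hk).mono
    (Measurable.aestronglyMeasurable (by unfold e; fun_prop))
    (Eventually.of_forall fun η => ?_)
  rw [norm_div, norm_e, one_div, norm_inv]

noncomputable def truncatedPowExp (a : ℝ) (n : ℕ) : ℝ → ℂ :=
  (Ioi 0).indicator fun t => (t : ℂ) ^ n * cexp (-a * t)

lemma integrable_truncatedPowExp {a : ℝ} (ha : 0 < a) (n : ℕ) :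
    Integrable (truncatedPowExp a n) :=
  (integrable_indicator_iff measurableSet_Ioi).mpr
    (integrableOn_pow_mul_cexp_neg_mul_Ioi (by simpa) n)

lemma fourierInv_truncatedPowExp {a : ℝ} (ha : 0 < a) (n : ℕ) (w : ℝ) :
    𝓕⁻ (truncatedPowExp a n) w = (n.factorial : ℂ) / ((a : ℂ) - 2 * π * I * w) ^ (n + 1) := by
  have hre : 0 < ((a : ℂ) - 2 * π * I * w).re := by simpa
  rw [fourierInv_eq', ← integral_pow_mul_cexp_neg_mul_Ioi hre,
    ← integral_indicator measurableSet_Ioi]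
  congr 1 with t
  by_cases ht : t ∈ Ioi 0
  · simp only [truncatedPowExp, indicator_of_mem ht, smul_eq_mul, RCLike.inner_apply,
      conj_trivial]
    rw [mul_left_comm, ← Complex.exp_add]
    congr 2
    push_cast
    ring
  · simp [truncatedPowExp, indicator_of_notMem ht]

lemma continuousAt_truncatedPowExp {a t : ℝ} (ht : 0 < t) (n : ℕ) :
    ContinuousAt (truncatedPowExp a n) t := by
  refine ContinuousAt.congr (f := fun t : ℝ => (t : ℂ) ^ n * cexp (-a * t)) (by fun_prop) ?_
  filter_upwards [isOpen_Ioi.mem_nhds ht] with s hs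
  simp [truncatedPowExp, indicator_of_mem hs]

theorem integral_e_neg_mul_div_pow {a : ℝ} (ha : 0 < a) {n : ℕ} (hn : 1 ≤ n) {ℓ : ℝ}
    (hℓ : 0 < ℓ) :
    ∫ η : ℝ, e (-ℓ * η) / ((a : ℂ) - 2 * π * I * η) ^ (n + 1)
      = Real.exp (-(a * ℓ)) * (ℓ : ℂ) ^ n / n.factorial := by
  have hInv : Integrable (𝓕⁻ (truncatedPowExp a n)) := by
    rw [funext (fourierInv_truncatedPowExp ha n)]
    simp_rw [div_eq_mul_inv]
    exact (integrable_inv_ofReal_sub_two_pi_I_mul_pow ha (by omega)).const_mul _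
  have hF : Integrable (𝓕 (truncatedPowExp a n)) := by
    simpa only [fourierInv_eq_fourier_neg, neg_neg] using hInv.comp_neg
  have hinv := (integrable_truncatedPowExp ha n).fourier_fourierInv_eq hF
    (continuousAt_truncatedPowExp hℓ n)
  rw [fourier_real_eq_integral_exp_smul] at hinv
  have hkernel : ∀ η : ℝ, cexp (↑(-2 * π * η * ℓ) * I) * 𝓕⁻ (truncatedPowExp a n) η
      = n.factorial * (e (-ℓ * η) / ((a : ℂ) - 2 * π * I * η) ^ (n + 1)) := fun η => by
    rw [fourierInv_truncatedPowExp ha n, e]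
    push_cast
    ring_nf
  have hgℓ : (truncatedPowExp a n) ℓ = Real.exp (-(a * ℓ)) * (ℓ : ℂ) ^ n := by
    simp [truncatedPowExp, hℓ, mul_comm]
  simp_rw [smul_eq_mul, hkernel] at hinv
  rw [integral_const_mul, hgℓ] at hinv
  rw [eq_div_iff (Nat.cast_ne_zero.mpr n.factorial_ne_zero), ← hinv, mul_comm]

lemma norm_setIntegral_e_div_pow_le {a δ : ℝ} (hδ : 0 < δ) {n : ℕ} (hn : 1 ≤ n) (ℓ : ℝ)
    {s : Set ℝ} (hs : MeasurableSet s) (hsδ : ∀ η ∈ s, δ ≤ |η|) :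
    ‖∫ η in s, e (ℓ * η) / ((a : ℂ) - 2 * π * I * η) ^ (n + 1)‖ ≤ 2 * δ⁻¹ ^ n / n := by
  have hbound := norm_setIntegral_le_of_norm_le_abs_rpow_neg hs (r := n + 1)
    (f := fun η => e (ℓ * η) / ((a : ℂ) - 2 * π * I * η) ^ (n + 1))
    (by linarith [show (1 : ℝ) ≤ n by exact_mod_cast hn]) hδ hsδ fun η hη => by
      exact_mod_cast norm_e_div_ofReal_sub_two_pi_I_mul_pow_le (ℓ * η) a
        (abs_pos.mp (hδ.trans_le (hsδ η hη))) (n + 1)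
  rwa [show 1 - (n + 1 : ℝ) = -n by ring, add_sub_cancel_right, Real.rpow_neg hδ.le,
    Real.rpow_natCast, ← inv_pow, ← mul_div_assoc] at hbound

/-- for `k ≥ 2`, `1 ≤ q ≤ Q ≤ √N/2` and any arc `ξ` with
`(-1/(2qQ), 1/(2qQ)) ⊆ ξ ⊆ (-1/(qQ), 1/(qQ)]`, uniformly for `1 ≤ ℓ ≤ N`,
`∫_ξ e(-ℓη)/z(η)^k dη = e^{-ℓ/N} ℓ^{k-1}/(k-1)! + O_k((qQ)^{k-1})`,
where `z(η) = 1/N - 2πiη`. -/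
theorem sums_of_many_primes_stmt5 (k : ℕ) (hk : 2 ≤ k) :
    ∃ C : ℝ, 0 < C ∧ ∀ N q Q ℓ : ℕ, 1 ≤ q → q ≤ Q → (Q : ℝ) ≤ Real.sqrt N / 2 →
      1 ≤ ℓ → ℓ ≤ N →
      ∀ ξ : Set ℝ, MeasurableSet ξ →
        Set.Ioo (-(1 / (2 * (q : ℝ) * Q))) (1 / (2 * (q : ℝ) * Q)) ⊆ ξ →
        ξ ⊆ Set.Ioc (-(1 / ((q : ℝ) * Q))) (1 / ((q : ℝ) * Q)) →
        ‖(∫ η in ξ, e (-(ℓ : ℝ) * η) / (1 / (N : ℂ) - 2 * Real.pi * Complex.I * η) ^ k)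
            - Real.exp (-(ℓ : ℝ) / N) * (ℓ : ℝ) ^ (k - 1) / (Nat.factorial (k - 1))‖
          ≤ C * ((q : ℝ) * Q) ^ (k - 1) := by
  refine ⟨2 ^ k, by positivity, fun N q Q ℓ hq hqQ hQN hℓ _ ξ hξ hξ_sub _ => ?_⟩
  obtain ⟨n, rfl⟩ : ∃ n, k = n + 1 := ⟨k - 1, by omega⟩
  have hn : 1 ≤ n := by omega
  have hQ : (1 : ℝ) ≤ Q := by exact_mod_cast hq.trans hqQ
  have hqQ0 : (0 : ℝ) < 2 * q * Q := by
    have : (1 : ℝ) ≤ q := by exact_mod_cast hq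
    positivity
  have ha : (0 : ℝ) < 1 / N := one_div_pos.mpr (Real.sqrt_pos.mp (by linarith))
  rw [show 1 / (N : ℂ) = ((1 / N : ℝ) : ℂ) by push_cast; rfl]
  have hfull := integral_add_compl hξ
    (integrable_e_div_ofReal_sub_two_pi_I_mul_pow ha (k := n + 1) (by omega) (-ℓ))
  rw [integral_e_neg_mul_div_pow ha hn (by positivity), one_div_mul_eq_div, ← neg_div] at hfull
  have hδ : ∀ η ∈ ξᶜ, (2 * q * Q : ℝ)⁻¹ ≤ |η| := fun η hη => by
    by_contra! h
    exact hη (hξ_sub (by simpa [one_div, abs_lt] using h))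
  rw [Nat.add_sub_cancel]
  calc _ = ‖∫ η in ξᶜ, e (-ℓ * η) / (((1 / N : ℝ) : ℂ) - 2 * π * I * η) ^ (n + 1)‖ := by
        rw [← hfull, sub_add_cancel_left, norm_neg]
    _ ≤ 2 * (2 * q * Q) ^ n / n :=
        (norm_setIntegral_e_div_pow_le (inv_pos.mpr hqQ0) hn _ hξ.compl hδ).trans_eq
          (by rw [inv_inv])
    _ ≤ 2 * (2 * q * Q) ^ n := div_le_self (by positivity) (by exact_mod_cast hn)
    _ = 2 ^ (n + 1) * (q * Q) ^ n := by ring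
end
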